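/- Grant Assumption D and let θ_max ∈ ℝ^p be the unique maximiser of the surrogate posterior density π̃(·|Z^{(n)}). Then there exists a constant c_W > 0 depending only on c₀, c_max, c_min such that on the event ℰ, ‖θ_init − θ_max‖ ≤ c_W^{1/2} · max(η, Λ_π/m). -/

import Mathlib

open MeasureTheory ProbabilityTheory Real
open scoped ENNReal NNReal BigOperators

noncomputable section

/-- The standard Gaussian measure `N(0, I_{p×p})` on `ℝ^p`. -/
def stdGaussian (p : ℕ) : Measure (EuclideanSpace ℝ (Fin p)) :=
  (Measure.pi fun _ : Fin p => gaussianReal 0 1).map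
    ((EuclideanSpace.equiv (Fin p) ℝ).symm)

/-- `f : ℝ^p → ℝ` is (differentiable and) `m`-strongly concave:
`f(θ') ≤ f(θ) + ∇f(θ)ᵀ(θ'-θ) - (m/2)‖θ'-θ‖²` for all `θ, θ'`. -/
def StronglyConcave {p : ℕ} (f : EuclideanSpace ℝ (Fin p) → ℝ) (m : ℝ) : Prop :=
  Differentiable ℝ f ∧
    ∀ θ θ' : EuclideanSpace ℝ (Fin p),
      f θ' ≤ f θ + (inner ℝ (gradient f θ) (θ' - θ) : ℝ) - m / 2 * ‖θ' - θ‖ ^ 2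

/-- `f : ℝ^p → ℝ` is (differentiable with) `Λ`-Lipschitz gradient. -/
def HasLipschitzGradient {p : ℕ} (f : EuclideanSpace ℝ (Fin p) → ℝ) (Λ : ℝ) : Prop :=
  Differentiable ℝ f ∧
    ∀ θ θ' : EuclideanSpace ℝ (Fin p), ‖gradient f θ - gradient f θ'‖ ≤ Λ * ‖θ - θ'‖

/-- The mollified convex function `v_η(t) = (φ_{η/8} * γ_η)(t)`,
with `γ_η(t) = ((t - 5η/8)₊)²`. -/
def vEta (φm : ℝ → ℝ) (η t : ℝ) : ℝ :=
  ∫ s : ℝ, (η / 8)⁻¹ * φm (s / (η / 8)) *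
    (if t - s < 5 * η / 8 then 0 else (t - s - 5 * η / 8) ^ 2)


lemma vEta_at_zero' (φm : ℝ → ℝ) (η : ℝ) (hη : 0 < η)
    (hφsupp : ∀ x, φm x ≠ 0 → x ∈ Set.Icc (-1 : ℝ) 1) : vEta φm η 0 = 0 := by
  have h8 : (0:ℝ) < η / 8 := by linarith
  have h0 : ∀ s : ℝ, (η / 8)⁻¹ * φm (s / (η / 8)) *
      (if (0:ℝ) - s < 5 * η / 8 then 0 else ((0:ℝ) - s - 5 * η / 8) ^ 2) = 0 := by
    intro s
    by_cases h : φm (s / (η / 8)) = 0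
    · simp [h]
    · have hs := hφsupp _ h
      have h1 : (-1 : ℝ) * (η/8) ≤ s := (le_div_iff₀ h8).mp hs.1
      have hlt : (0:ℝ) - s < 5 * η / 8 := by linarith
      rw [if_pos hlt, mul_zero]
  unfold vEta
  rw [show (fun s : ℝ => (η / 8)⁻¹ * φm (s / (η / 8)) *
      (if (0:ℝ) - s < 5 * η / 8 then 0 else ((0:ℝ) - s - 5 * η / 8) ^ 2)) = fun _ => (0:ℝ)
    from funext h0]
  exact integral_zero _ _

lemma vEta_lower' (φm : ℝ → ℝ) (hφc : Continuous φm) (hφpos : ∀ x, 0 ≤ φm x)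
    (hφsupp : ∀ x, φm x ≠ 0 → x ∈ Set.Icc (-1 : ℝ) 1) (hφint : (∫ x, φm x) = 1)
    (η r : ℝ) (hη : 0 < η) (hr : 2 * η ≤ r) :
    (r - 3 * η / 4) ^ 2 ≤ vEta φm η r := by
  have h8 : (0:ℝ) < η / 8 := by linarith
  set c : ℝ → ℝ := fun s => (η / 8)⁻¹ * φm (s / (η / 8)) with hc
  have hc_cont : Continuous c := (continuous_const.mul (hφc.comp (continuous_id.div_const _)))
  have hc_supp : HasCompactSupport c := by
    apply HasCompactSupport.intro (isCompact_Icc (a := -(η/8)) (b := η/8))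
    intro x hx
    by_cases h : φm (x / (η / 8)) = 0
    · simp [hc, h]
    · exfalso
      have hs := hφsupp _ h
      have h1 : (-1 : ℝ) * (η/8) ≤ x := (le_div_iff₀ h8).mp hs.1
      have h2 : x ≤ 1 * (η/8) := (div_le_iff₀ h8).mp hs.2
      exact hx ⟨by linarith, by linarith⟩
  have hc_int : Integrable c := hc_cont.integrable_of_hasCompactSupport hc_supp
  have hc_nonneg : ∀ s, 0 ≤ c s := fun s => mul_nonneg (by positivity) (hφpos _)
  have hc_sum : (∫ s, c s) = 1 := by
    have hcomp := MeasureTheory.Measure.integral_comp_div φm (η/8)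
    rw [hc]
    rw [MeasureTheory.integral_const_mul, hcomp, abs_of_pos h8, smul_eq_mul, hφint]
    field_simp
  set g : ℝ → ℝ := fun t => if t < 5 * η / 8 then 0 else (t - 5 * η / 8) ^ 2 with hg
  have hg_eq : g = fun t => (max (t - 5 * η / 8) 0) ^ 2 := by
    funext t
    by_cases h : t < 5 * η / 8
    · simp [hg, if_pos h, max_eq_right (by linarith : t - 5 * η / 8 ≤ 0)]
    · push_neg at h
      simp [hg, if_neg (not_lt.mpr h), max_eq_left (by linarith : (0:ℝ) ≤ t - 5 * η / 8)]
  have hg_cont : Continuous g := by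
    rw [hg_eq]
    exact ((continuous_id.sub continuous_const).max continuous_const).pow 2
  have hh_cont : Continuous (fun s => c s * g (r - s)) :=
    hc_cont.mul (hg_cont.comp (continuous_const.sub continuous_id))
  have hh_supp : HasCompactSupport (fun s => c s * g (r - s)) := by
    apply HasCompactSupport.intro (isCompact_Icc (a := -(η/8)) (b := η/8))
    intro x hx
    have : c x = 0 := by
      by_cases h : φm (x / (η / 8)) = 0
      · simp [hc, h]
      · exfalso
        have hs := hφsupp _ h
        have h1 : (-1 : ℝ) * (η/8) ≤ x := (le_div_iff₀ h8).mp hs.1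
        have h2 : x ≤ 1 * (η/8) := (div_le_iff₀ h8).mp hs.2
        exact hx ⟨by linarith, by linarith⟩
    simp [this]
  have hh_int : Integrable (fun s => c s * g (r - s)) :=
    hh_cont.integrable_of_hasCompactSupport hh_supp
  have hmono : ∀ s, c s * (r - 3 * η / 4) ^ 2 ≤ c s * g (r - s) := by
    intro s
    by_cases h : φm (s / (η / 8)) = 0
    · simp [hc, h]
    · have hs := hφsupp _ h
      have h2 : s ≤ 1 * (η/8) := (div_le_iff₀ h8).mp hs.2
      have hnot : ¬ (r - s < 5 * η / 8) := by push_neg; linarith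
      have hgv : g (r - s) = (r - s - 5 * η / 8) ^ 2 := if_neg hnot
      have hge : (r - 3 * η / 4) ^ 2 ≤ (r - s - 5 * η / 8) ^ 2 := by
        apply pow_le_pow_left₀ (by linarith) (by linarith)
      rw [hgv]
      exact mul_le_mul_of_nonneg_left hge (hc_nonneg s)
  have key : (∫ s, c s * (r - 3 * η / 4) ^ 2) ≤ ∫ s, c s * g (r - s) :=
    integral_mono (hc_int.mul_const _) hh_int hmono
  rw [MeasureTheory.integral_mul_const, hc_sum, one_mul] at key
  exact key.trans_eq rfl

/-- **Lemma 5.8 (distance of the initialiser to the surrogate posterior mode).** Under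
Assumption D, if `θ_max` is the unique maximiser of the surrogate posterior density
`π̃(·|Z^{(n)})`, then there is a constant `c_W > 0` (depending only on
`c₀, c_max, c_min`) such that on the event `ℰ`,
`‖θ_init - θ_max‖ ≤ c_W^{1/2} max(η, Λ_π/m)`. -/
theorem initialiser_to_mode_distance
    -- structural constants
    (c₀ β cmax cmin κ₁ κ₂ κ₃ C cE cE' vC2 : ℝ)
    (hc₀ : 0 < c₀) (hβ : 1 ≤ β) (hcmin : 0 < cmin) (hcmaxmin : cmin ≤ cmax)
    (hκ₁ : 0 ≤ κ₁) (hκ₂ : 0 ≤ κ₂) (hκ₃ : 0 ≤ κ₃) (hC : 0 < C)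
    (hcE : 0 < cE) (hcE' : 0 < cE')
    -- the n-indexed model: dimension, rate, radius, prior constants, curvature parameter
    (p : ℕ → ℕ) (δ : ℕ → ℝ) (η : ℕ → ℝ) (mπ Λπ K : ℕ → ℝ)
    (Ω : ℕ → Type) [∀ n, MeasurableSpace (Ω n)]
    (P : ∀ n, Measure (Ω n)) [∀ n, IsProbabilityMeasure (P n)]
    (ℓn : ∀ n : ℕ, EuclideanSpace ℝ (Fin (p n)) → Ω n → ℝ)
    (ℓn0 : ∀ n : ℕ, Ω n → ℝ)
    (prior : ∀ n : ℕ, EuclideanSpace ℝ (Fin (p n)) → ℝ)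
    (θstar θinit θπmax : ∀ n : ℕ, EuclideanSpace ℝ (Fin (p n)))
    (Eev : ∀ n : ℕ, Set (Ω n))
    (hδpos : ∀ n, 0 < δ n) (hδ0 : Filter.Tendsto δ Filter.atTop (nhds 0))
    (hθstar : ∀ n, ‖θstar n‖ ≤ c₀)
    -- Assumption A: posterior contraction and small-ball bound for normalising factors
    (hA : ∀ c > (0 : ℝ), ∃ L₀ : ℝ, ∀ L ≥ L₀,
      ∃ C₁ > (0 : ℝ), ∃ C₂ > (0 : ℝ), ∃ C₃ > (0 : ℝ), ∃ C₄ > (0 : ℝ), ∀ n : ℕ,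
      P n {ω : Ω n | Real.exp (-c * n * δ n ^ 2) ≤
            (∫ θ in {θ : EuclideanSpace ℝ (Fin (p n)) | L * δ n < ‖θ - θstar n‖ ^ β},
              Real.exp (ℓn n θ ω) * prior n θ)
              / ∫ θ, Real.exp (ℓn n θ ω) * prior n θ}
          ≤ ENNReal.ofReal (C₂ * Real.exp (-C₁ * n * δ n ^ 2)) ∧
      P n {ω : Ω n | (∫ θ in {θ : EuclideanSpace ℝ (Fin (p n)) | ‖θ - θstar n‖ ≤ δ n},
              Real.exp (ℓn n θ ω - ℓn0 n ω) * prior n θ)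
            ≤ Real.exp (-C₃ * n * δ n ^ 2)}
          ≤ ENNReal.ofReal (Real.exp (-C₄ * n * δ n ^ 2)))
    -- Assumption B: strongly log-concave prior with Lipschitz gradients
    (hmπ : ∀ n, 0 < mπ n) (hΛπ : ∀ n, 0 < Λπ n)
    (hprior : ∀ n, (∀ θ, 0 < prior n θ) ∧ (∫ θ, prior n θ) = 1)
    (hBconc : ∀ n, StronglyConcave (fun θ => Real.log (prior n θ)) (mπ n))
    (hBlip : ∀ n, HasLipschitzGradient (fun θ => Real.log (prior n θ)) (Λπ n))
    (hBmax : ∀ n, (∀ θ, Real.log (prior n θ) ≤ Real.log (prior n (θπmax n))) ∧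
      (∀ θ, (∀ θ', Real.log (prior n θ') ≤ Real.log (prior n θ)) → θ = θπmax n) ∧
      ‖θπmax n‖ ≤ c₀)
    (hBmom : ∃ Cm : ℝ, ∀ n, (∫ θ, ‖θ‖ ^ 4 * prior n θ) ≤ Cm)
    -- Assumption C: the event ℰ, local boundedness and local curvature on 𝓑
    (hηpos : ∀ n, 0 < η n ∧ η n ≤ 1)
    (hE : ∀ n, 1 - ENNReal.ofReal (cE' * Real.exp (-cE * n * δ n ^ 2)) ≤ P n (Eev n))
    (hCsmooth : ∀ n, ∀ᵐ ω ∂P n, ContDiffOn ℝ 2 (fun θ => ℓn n θ ω)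
      (Metric.closedBall (θstar n) (η n)))
    (hCbound : ∀ n, ∀ ω ∈ Eev n,
      ‖gradient (fun θ => ℓn n θ ω) (θstar n)‖ ≤ cmax * n * δ n * (p n : ℝ) ^ κ₁ ∧
      ∀ θ ∈ Metric.closedBall (θstar n) (η n),
        ‖fderiv ℝ (fun x => gradient (fun y => ℓn n y ω) x) θ‖ ≤ cmax * n * (p n : ℝ) ^ κ₂)
    (hCcurv : ∀ n, ∀ ω ∈ Eev n, ∀ θ ∈ Metric.closedBall (θstar n) (η n),
      ∀ w : EuclideanSpace ℝ (Fin (p n)),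
        (inner ℝ w (fderiv ℝ (fun x => gradient (fun y => ℓn n y ω) x) θ w) : ℝ)
          ≤ -(cmin * n * (p n : ℝ) ^ (-κ₃)) * ‖w‖ ^ 2)
    -- Assumption D: initialiser and growth conditions
    (hinit : ∀ n, ‖θinit n - θstar n‖ ≤ η n / 8)
    (hpD : ∀ n, (p n : ℝ) ≤ C * n * δ n ^ 2)
    (hηD : ∀ n : ℕ, Real.log n * max (δ n ^ ((1 : ℝ) / β)) (δ n * (p n : ℝ) ^ (κ₁ + κ₃)) ≤ η n)
    (hKD : ∀ n : ℕ, 60 * cmax * vC2 * n * (1 + (p n : ℝ) ^ κ₂) ≤ K n)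
    -- cutoff function, its C²-norm bound, and mollifier
    (v : ℝ → ℝ) (hv : ContDiff ℝ (⊤ : ℕ∞) v) (hv1 : ∀ t ≤ (3 : ℝ) / 4, v t = 1)
    (hv0 : ∀ t : ℝ, (7 : ℝ) / 8 < t → v t = 0) (hv01 : ∀ t, v t ∈ Set.Icc (0 : ℝ) 1)
    (hvC2 : ∀ t : ℝ, |v t| ≤ vC2 ∧ |deriv v t| ≤ vC2 ∧ |deriv (deriv v) t| ≤ vC2)
    (φm : ℝ → ℝ) (hφ : ContDiff ℝ (⊤ : ℕ∞) φm) (hφpos : ∀ x, 0 ≤ φm x)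
    (hφsupp : ∀ x, φm x ≠ 0 → x ∈ Set.Icc (-1 : ℝ) 1)
    (hφsym : ∀ x, φm (-x) = φm x) (hφint : (∫ x, φm x) = 1)
    -- the surrogate log-likelihood
    (ℓtilde : ∀ n : ℕ, Ω n → EuclideanSpace ℝ (Fin (p n)) → ℝ)
    (hℓtilde : ∀ n ω θ, ℓtilde n ω θ
      = v (‖θ - θinit n‖ / η n) * (ℓn n θ ω - ℓn n (θinit n) ω) + ℓn n (θinit n) ω
        - K n * vEta φm (η n) ‖θ - θinit n‖)
    -- the constant m of the surrogate log-posterior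
    (m : ℕ → ℝ) (hm : ∀ n : ℕ, m n = cmin * n * (p n : ℝ) ^ (-κ₃) + mπ n)
    -- the unique maximiser of the surrogate posterior density
    (θmax : ∀ n : ℕ, Ω n → EuclideanSpace ℝ (Fin (p n)))
    (hθmax : ∀ n ω, (∀ θ : EuclideanSpace ℝ (Fin (p n)),
        Real.exp (ℓtilde n ω θ) * prior n θ
          ≤ Real.exp (ℓtilde n ω (θmax n ω)) * prior n (θmax n ω)) ∧
      ∀ θ : EuclideanSpace ℝ (Fin (p n)),
        (∀ θ' : EuclideanSpace ℝ (Fin (p n)),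
          Real.exp (ℓtilde n ω θ') * prior n θ' ≤ Real.exp (ℓtilde n ω θ) * prior n θ) →
        θ = θmax n ω)
 :
    ∃ cW > (0 : ℝ), ∀ n : ℕ, ∀ ω ∈ Eev n,
      ‖θinit n - θmax n ω‖ ≤ Real.sqrt cW * max (η n) (Λπ n / m n) := by
  classical
  set c' : ℝ := 2 * c₀ + 1 / 8 with hc'
  have hc'pos : 0 < c' := by rw [hc']; linarith
  have hs0pos : (0:ℝ) < max 2 (4 * c') := lt_of_lt_of_le (by norm_num) (le_max_left _ _)
  refine ⟨(max 2 (4 * c')) ^ 2, by positivity, ?_⟩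
  intro n ω hω
  rw [Real.sqrt_sq hs0pos.le, norm_sub_rev]
  have hηn := hηpos n
  have hcmax : (0:ℝ) < cmax := lt_of_lt_of_le hcmin hcmaxmin
  have hmpos : 0 < m n := by
    rw [hm]
    have h1 : 0 ≤ cmin * (n:ℝ) * (p n : ℝ) ^ (-κ₃) := by positivity
    linarith [hmπ n]
  have hΛmnonneg : 0 ≤ Λπ n / m n := div_nonneg (hΛπ n).le hmpos.le
  by_cases hp : p n = 0
  · have heq : θmax n ω = θinit n := by
      ext i
      exact absurd i.2 (by omega)
    rw [heq, sub_self, norm_zero]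
    exact mul_nonneg hs0pos.le (le_trans hηn.1.le (le_max_left _ _))
  have hp1 : (1:ℝ) ≤ (p n : ℝ) := by exact_mod_cast Nat.one_le_iff_ne_zero.mpr hp
  have claim : ‖θmax n ω - θinit n‖ ≤ max (2 * η n) (4 * c' * (Λπ n / m n)) := by
    by_contra hcon
    push_neg at hcon
    rw [max_lt_iff] at hcon
    obtain ⟨hR2, hRΛ⟩ := hcon
    have hRpos : 0 < ‖θmax n ω - θinit n‖ := lt_trans (by linarith [hηn.1]) hR2
    have hle := (hθmax n ω).1 (θinit n)
    have hpri := hprior n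
    have hlog : ℓtilde n ω (θinit n) + Real.log (prior n (θinit n)) ≤
        ℓtilde n ω (θmax n ω) + Real.log (prior n (θmax n ω)) := by
      have h1 : 0 < Real.exp (ℓtilde n ω (θinit n)) * prior n (θinit n) :=
        mul_pos (Real.exp_pos _) (hpri.1 _)
      have hlg := Real.log_le_log h1 hle
      rwa [Real.log_mul (Real.exp_ne_zero _) (hpri.1 _).ne',
        Real.log_mul (Real.exp_ne_zero _) (hpri.1 _).ne',
        Real.log_exp, Real.log_exp] at hlg
    have hti : ℓtilde n ω (θinit n) = ℓn n (θinit n) ω := by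
      rw [hℓtilde]
      simp only [sub_self, norm_zero, zero_div]
      rw [hv1 0 (by norm_num), vEta_at_zero' φm (η n) hηn.1 hφsupp]
      ring
    have hR78 : (7:ℝ)/8 < ‖θmax n ω - θinit n‖ / η n := by
      rw [lt_div_iff₀ hηn.1]
      linarith
    have htm : ℓtilde n ω (θmax n ω)
        = ℓn n (θinit n) ω - K n * vEta φm (η n) ‖θmax n ω - θinit n‖ := by
      rw [hℓtilde, hv0 _ hR78]
      ring
    have hvge : (‖θmax n ω - θinit n‖ - 3 * η n / 4) ^ 2
        ≤ vEta φm (η n) ‖θmax n ω - θinit n‖ :=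
      vEta_lower' φm hφ.continuous hφpos hφsupp hφint (η n) _ hηn.1 hR2.le
    obtain ⟨hdiffπ, hconc⟩ := hBconc n
    have hcc := hconc (θinit n) (θmax n ω)
    beta_reduce at hcc
    have hgz : gradient (fun θ => Real.log (prior n θ)) (θπmax n) = 0 := by
      have hmaxπ : IsLocalMax (fun θ => Real.log (prior n θ)) (θπmax n) :=
        Filter.Eventually.of_forall (hBmax n).1
      have hf0 := hmaxπ.fderiv_eq_zero
      unfold gradient
      rw [hf0, map_zero]
    have hglip := (hBlip n).2 (θinit n) (θπmax n)
    rw [hgz, sub_zero] at hglip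
    have hdist : ‖θinit n - θπmax n‖ ≤ c' := by
      have t1 : ‖θinit n - θπmax n‖ ≤ ‖θinit n - θstar n‖ + ‖θstar n - θπmax n‖ :=
        norm_sub_le_norm_sub_add_norm_sub _ _ _
      have t2 : ‖θstar n - θπmax n‖ ≤ ‖θstar n‖ + ‖θπmax n‖ := norm_sub_le _ _
      have t3 := hinit n
      have t4 := hθstar n
      have t5 := (hBmax n).2.2
      rw [hc']
      linarith only [t1, t2, t3, t4, t5, hηn.2]
    have hgnorm : ‖gradient (fun θ => Real.log (prior n θ)) (θinit n)‖ ≤ Λπ n * c' :=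
      hglip.trans (mul_le_mul_of_nonneg_left hdist (hΛπ n).le)
    have hinner : (inner ℝ (gradient (fun θ => Real.log (prior n θ)) (θinit n))
        (θmax n ω - θinit n) : ℝ) ≤ Λπ n * c' * ‖θmax n ω - θinit n‖ :=
      le_trans (real_inner_le_norm _ _)
        (mul_le_mul_of_nonneg_right hgnorm (norm_nonneg _))
    have hn0 : (0:ℝ) ≤ (n:ℝ) := Nat.cast_nonneg n
    have hvC2one : 1 ≤ vC2 := by
      have h := (hvC2 0).1
      rw [hv1 0 (by norm_num)] at h
      simpa using h
    have hpκ3 : (p n : ℝ) ^ (-κ₃) ≤ 1 :=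
      Real.rpow_le_one_of_one_le_of_nonpos hp1 (neg_nonpos.mpr hκ₃)
    have hpκ3pos : 0 ≤ (p n : ℝ) ^ (-κ₃) := Real.rpow_nonneg (by linarith) _
    have hpκ2pos : 0 ≤ (p n : ℝ) ^ κ₂ := Real.rpow_nonneg (by linarith) _
    have hK : cmin * (n:ℝ) * (p n : ℝ) ^ (-κ₃) ≤ K n := by
      have a1 : cmin * (n:ℝ) * (p n:ℝ)^(-κ₃) ≤ cmin * (n:ℝ) * 1 :=
        mul_le_mul_of_nonneg_left hpκ3 (by positivity)
      have a2 : cmin * (n:ℝ) ≤ cmax * (n:ℝ) := mul_le_mul_of_nonneg_right hcmaxmin hn0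
      have b1 : (1:ℝ) * 1 ≤ (60 * vC2) * (1 + (p n:ℝ)^κ₂) :=
        mul_le_mul (by linarith only [hvC2one]) (by linarith only [hpκ2pos])
          (by norm_num) (by positivity)
      have b2 : cmax * (n:ℝ) * 1 ≤ cmax * (n:ℝ) * ((60 * vC2) * (1 + (p n:ℝ)^κ₂)) :=
        mul_le_mul_of_nonneg_left (by linarith only [b1]) (mul_nonneg hcmax.le hn0)
      linarith only [a1, a2, b2, hKD n]
    have hKnonneg : 0 ≤ K n := le_trans (by positivity) hK
    have hcomb : K n * (‖θmax n ω - θinit n‖ - 3 * η n / 4) ^ 2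
        + mπ n / 2 * ‖θmax n ω - θinit n‖ ^ 2 ≤ Λπ n * c' * ‖θmax n ω - θinit n‖ := by
      have e1 : K n * (‖θmax n ω - θinit n‖ - 3 * η n / 4) ^ 2
          ≤ K n * vEta φm (η n) ‖θmax n ω - θinit n‖ :=
        mul_le_mul_of_nonneg_left hvge hKnonneg
      rw [hti, htm] at hlog
      have hcc2 : Real.log (prior n (θmax n ω)) ≤ Real.log (prior n (θinit n))
          + Λπ n * c' * ‖θmax n ω - θinit n‖
          - mπ n / 2 * ‖θmax n ω - θinit n‖ ^ 2 := by
        refine hcc.trans ?_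
        exact sub_le_sub_right (add_le_add le_rfl hinner) _
      linarith only [hcc2, e1, hlog]
    have h34 : ‖θmax n ω - θinit n‖ / 2 ≤ ‖θmax n ω - θinit n‖ - 3 * η n / 4 := by
      linarith only [hR2, hηn.1]
    have hq : (‖θmax n ω - θinit n‖ / 2) ^ 2
        ≤ (‖θmax n ω - θinit n‖ - 3 * η n / 4) ^ 2 :=
      pow_le_pow_left₀ (by positivity) h34 2
    have hfinal2 : m n / 4 * ‖θmax n ω - θinit n‖ ^ 2
        ≤ Λπ n * c' * ‖θmax n ω - θinit n‖ := by
      have hKR := mul_le_mul_of_nonneg_right hK (sq_nonneg ‖θmax n ω - θinit n‖)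
      have hKq := mul_le_mul_of_nonneg_left hq hKnonneg
      rw [hm]
      linarith only [hcomb, hKq, hKR,
        mul_nonneg (hmπ n).le (sq_nonneg ‖θmax n ω - θinit n‖)]
    have hlast : Λπ n * c' * ‖θmax n ω - θinit n‖
        < m n / 4 * ‖θmax n ω - θinit n‖ * ‖θmax n ω - θinit n‖ := by
      have step : (4 * c' * (Λπ n / m n)) * (m n / 4)
          < ‖θmax n ω - θinit n‖ * (m n / 4) :=
        mul_lt_mul_of_pos_right hRΛ (by positivity)
      calc Λπ n * c' * ‖θmax n ω - θinit n‖
          = (4 * c' * (Λπ n / m n)) * (m n / 4) * ‖θmax n ω - θinit n‖ := by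
            field_simp
        _ < (‖θmax n ω - θinit n‖ * (m n / 4)) * ‖θmax n ω - θinit n‖ :=
            mul_lt_mul_of_pos_right step hRpos
        _ = m n / 4 * ‖θmax n ω - θinit n‖ * ‖θmax n ω - θinit n‖ := by ring
    linarith only [hfinal2, hlast]
  refine claim.trans ?_
  rw [max_le_iff]
  have hmaxnn : 0 ≤ max (η n) (Λπ n / m n) := le_trans hηn.1.le (le_max_left _ _)
  constructor
  · calc 2 * η n ≤ 2 * max (η n) (Λπ n / m n) := by
          linarith only [le_max_left (η n) (Λπ n / m n)]
      _ ≤ max 2 (4 * c') * max (η n) (Λπ n / m n) :=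
          mul_le_mul_of_nonneg_right (le_max_left _ _) hmaxnn
  · calc 4 * c' * (Λπ n / m n) ≤ 4 * c' * max (η n) (Λπ n / m n) :=
          mul_le_mul_of_nonneg_left (le_max_right _ _) (by positivity)
      _ ≤ max 2 (4 * c') * max (η n) (Λπ n / m n) :=
          mul_le_mul_of_nonneg_right (le_max_right _ _) hmaxnn
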